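/- There exists an integrable log-concave function f : ℝ → [0,∞) such that h(f) + h(f°) > 1. Concretely, for f(x) = min(1, e^{1-|x|}) raised to a sufficiently large power t, one has h(f^t) + h((f^t)°) = 1/(t+1) + 1 - t/(e^t - 1) > 1, because e^t > 1 + t + t² for large t. -/

import Mathlib

open MeasureTheory Real

noncomputable section

def LogConcave (f : ℝ → ℝ) : Prop :=
  ∀ x y : ℝ, ∀ a b : ℝ, 0 ≤ a → 0 ≤ b → a + b = 1 →
    f x ^ a * f y ^ b ≤ f (a * x + b * y)

/-- The polar of a nonnegative function on `ℝ`. -/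
def polar1 (f : ℝ → ℝ) (y : ℝ) : ℝ :=
  ⨅ x : {x : ℝ // 0 < f x}, Real.exp (-((x : ℝ) * y)) / f x

/-- The (normalized) differential entropy `h(g) = -(∫ g log g)/(∫ g)`. -/
def entropy (g : ℝ → ℝ) : ℝ :=
  -(∫ x, g x * Real.log (g x)) / (∫ x, g x)

section Aux

open Set Filter Topology

/-- The profile of the counterexample function: `F0 u = e^{-u}` for `u ≤ 4`, `0` beyond. -/
def F0 : ℝ → ℝ := fun u => if u ≤ 4 then Real.exp (-u) else 0

/-- The counterexample function `f(x) = e^{-|x|} 1_{|x| ≤ 4}`. -/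
def myf : ℝ → ℝ := fun x => F0 |x|

/-- The profile of the polar: `G0 u = e^{-4 max(u-1,0)}`. -/
def G0 : ℝ → ℝ := fun u => Real.exp (-(4 * max (u - 1) 0))

/-- The polar of `myf`: `g(y) = e^{-4 max(|y|-1,0)}`. -/
def myg : ℝ → ℝ := fun y => G0 |y|

lemma myf_nonneg (x : ℝ) : 0 ≤ myf x := by
  unfold myf F0; split <;> positivity

lemma myf_eq_of_le {x : ℝ} (h : |x| ≤ 4) : myf x = Real.exp (-|x|) := by
  simp [myf, F0, h]

lemma myf_pos_iff {x : ℝ} : 0 < myf x ↔ |x| ≤ 4 := by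
  unfold myf F0
  by_cases h : |x| ≤ 4 <;> simp [h, exp_pos]

lemma myf_integrable : Integrable myf := by
  have h1 : myf = Set.indicator (Icc (-4) (4:ℝ)) (fun x => Real.exp (-|x|)) := by
    funext x
    by_cases h : |x| ≤ 4
    · rw [Set.indicator_of_mem (by rw [Set.mem_Icc, ← abs_le]; exact h), myf_eq_of_le h]
    · rw [Set.indicator_of_notMem (by rw [Set.mem_Icc, ← abs_le]; exact h)]
      simp [myf, F0, h]
  rw [h1]
  exact ((continuous_exp.comp continuous_abs.neg).integrableOn_Icc).integrable_indicator
    measurableSet_Icc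

lemma myf_logconcave : LogConcave myf := by
  intro x y a b ha hb hab
  rcases eq_or_lt_of_le ha with rfl | ha'
  · simp only [rpow_zero, one_mul]
    have hb1 : b = 1 := by linarith
    subst hb1
    simp [rpow_one]
  rcases eq_or_lt_of_le hb with rfl | hb'
  · simp only [rpow_zero, mul_one]
    have ha1 : a = 1 := by linarith
    subst ha1
    simp [rpow_one]
  by_cases hx : |x| ≤ 4
  · by_cases hy : |y| ≤ 4
    · have hxy : |a * x + b * y| ≤ 4 := by
        calc |a * x + b * y| ≤ |a * x| + |b * y| := abs_add_le _ _
        _ = a * |x| + b * |y| := by rw [abs_mul, abs_mul, abs_of_nonneg ha, abs_of_nonneg hb]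
        _ ≤ a * 4 + b * 4 := by
            apply add_le_add (mul_le_mul_of_nonneg_left hx ha) (mul_le_mul_of_nonneg_left hy hb)
        _ = 4 := by linarith
      rw [myf_eq_of_le hx, myf_eq_of_le hy, myf_eq_of_le hxy,
        ← Real.exp_one_rpow (-|x|), ← Real.exp_one_rpow (-|y|),
        ← Real.rpow_mul (exp_pos 1).le, ← Real.rpow_mul (exp_pos 1).le,
        ← Real.rpow_add (exp_pos 1), Real.exp_one_rpow, exp_le_exp]
      have h1 : |a * x + b * y| ≤ a * |x| + b * |y| := by
        calc |a * x + b * y| ≤ |a * x| + |b * y| := abs_add_le _ _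
        _ = a * |x| + b * |y| := by rw [abs_mul, abs_mul, abs_of_nonneg ha, abs_of_nonneg hb]
      nlinarith
    · have : myf y = 0 := by
        have := myf_pos_iff (x := y)
        rcases eq_or_lt_of_le (myf_nonneg y) with h | h
        · exact h.symm
        · exact absurd (this.1 h) hy
      rw [this, Real.zero_rpow (ne_of_gt hb'), mul_zero]
      exact myf_nonneg _
  · have : myf x = 0 := by
      rcases eq_or_lt_of_le (myf_nonneg x) with h | h
      · exact h.symm
      · exact absurd (myf_pos_iff.1 h) hx
    rw [this, Real.zero_rpow (ne_of_gt ha'), zero_mul]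
    exact myf_nonneg _

lemma G0_eq_one {u : ℝ} (h : u ≤ 1) : G0 u = 1 := by
  simp [G0, max_eq_right (by linarith : u - 1 ≤ 0)]

lemma G0_eq_of_ge {u : ℝ} (h : 1 ≤ u) : G0 u = Real.exp (-(4 * (u - 1))) := by
  simp [G0, max_eq_left (by linarith : (0:ℝ) ≤ u - 1)]

lemma polar_value {x : ℝ} (hx : 0 < myf x) (y : ℝ) :
    Real.exp (-(x * y)) / myf x = Real.exp (|x| - x * y) := by
  rw [myf_eq_of_le (myf_pos_iff.1 hx), ← Real.exp_sub]
  ring_nf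

/-- The polar of `myf` is `myg`. -/
lemma polar_myf : polar1 myf = myg := by
  funext y
  unfold polar1
  have hne : Nonempty {x : ℝ // 0 < myf x} :=
    ⟨⟨0, myf_pos_iff.2 (by norm_num)⟩⟩
  have hbdd : BddBelow (Set.range fun x : {x : ℝ // 0 < myf x} =>
      Real.exp (-((x : ℝ) * y)) / myf x) := by
    refine ⟨0, ?_⟩
    rintro v ⟨x, rfl⟩
    exact div_nonneg (exp_pos _).le (myf_nonneg _)
  apply le_antisymm
  · -- iInf ≤ myg y, via a witness
    by_cases hy : |y| ≤ 1
    · have hw : (0:ℝ) < myf 0 := myf_pos_iff.2 (by norm_num)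
      refine (ciInf_le hbdd ⟨0, hw⟩).trans_eq ?_
      rw [polar_value hw]
      have : myg y = 1 := by
        simp [myg, G0, max_eq_right (by linarith : |y| - 1 ≤ 0)]
      rw [this]
      norm_num
    · push_neg at hy
      set x₀ : ℝ := if 0 ≤ y then 4 else -4 with hx₀def
      have habs : |x₀| = 4 := by
        rw [hx₀def]; split <;> simp [abs_of_nonneg, abs_of_nonpos]
      have hw : (0:ℝ) < myf x₀ := myf_pos_iff.2 (by rw [habs])
      refine (ciInf_le hbdd ⟨x₀, hw⟩).trans_eq ?_
      rw [polar_value hw, habs]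
      have hxy : x₀ * y = 4 * |y| := by
        rw [hx₀def]
        rcases le_or_gt 0 y with h | h
        · rw [if_pos h, abs_of_nonneg h]
        · rw [if_neg (not_le.2 h), abs_of_neg h]; ring
      rw [hxy]
      have : myg y = Real.exp (-(4 * (|y| - 1))) := by
        simp [myg, G0, max_eq_left (by linarith : (0:ℝ) ≤ |y| - 1)]
      rw [this]
      congr 1
      ring
  · -- myg y is a lower bound
    apply le_ciInf
    rintro ⟨x, hx⟩
    rw [polar_value hx]
    have hx4 : |x| ≤ 4 := myf_pos_iff.1 hx
    have hxy : x * y ≤ |x| * |y| := by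
      calc x * y ≤ |x * y| := le_abs_self _
      _ = |x| * |y| := abs_mul x y
    show G0 |y| ≤ _
    rcases le_or_gt (|y|) 1 with hy | hy
    · rw [G0_eq_one hy, ← Real.exp_zero, exp_le_exp]
      nlinarith [abs_nonneg x]
    · have : G0 |y| = Real.exp (-(4 * (|y| - 1))) := by
        simp [G0, max_eq_left (by linarith : (0:ℝ) ≤ |y| - 1)]
      rw [this, exp_le_exp]
      nlinarith [abs_nonneg x, abs_nonneg y]

/-! ### The four integrals -/

lemma int_myf : ∫ x, myf x = 2 - 2 * Real.exp (-4) := by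
  have h0 : ∫ x, myf x = 2 * ∫ u in Ioi (0:ℝ), F0 u := integral_comp_abs (f := F0)
  have h1 : F0 = Set.indicator (Iic (4:ℝ)) (fun u => Real.exp (-u)) := by
    funext u; simp [F0, Set.indicator_apply]
  have h2 : ∫ u in Ioi (0:ℝ), F0 u = ∫ u in Ioc (0:ℝ) 4, Real.exp (-u) := by
    rw [h1, setIntegral_indicator measurableSet_Iic, Set.Ioi_inter_Iic]
  have h3 : ∫ u in Ioc (0:ℝ) 4, Real.exp (-u) = ∫ u in (0:ℝ)..4, Real.exp (-u) := by
    rw [intervalIntegral.integral_of_le (by norm_num)]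
  have h4 : ∫ u in (0:ℝ)..4, Real.exp (-u) = (-Real.exp (-4)) - (-Real.exp (-0)) := by
    apply intervalIntegral.integral_eq_sub_of_hasDerivAt (f := fun x => -Real.exp (-x))
    · intro x _
      simpa using ((hasDerivAt_neg x).exp).fun_neg
    · exact (continuous_exp.comp continuous_neg).intervalIntegrable _ _
  rw [h0, h2, h3, h4]; simp; ring

lemma int_myf_log : ∫ x, myf x * Real.log (myf x) = 10 * Real.exp (-4) - 2 := by
  have h0 : ∫ x, myf x * Real.log (myf x) = 2 * ∫ u in Ioi (0:ℝ), F0 u * Real.log (F0 u) :=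
    integral_comp_abs (f := fun u => F0 u * Real.log (F0 u))
  have h1 : (fun u => F0 u * Real.log (F0 u))
      = Set.indicator (Iic (4:ℝ)) (fun u => Real.exp (-u) * (-u)) := by
    funext u
    by_cases h : u ≤ 4 <;> simp [F0, Set.indicator_apply, h]
  have h2 : ∫ u in Ioi (0:ℝ), F0 u * Real.log (F0 u)
      = ∫ u in Ioc (0:ℝ) 4, Real.exp (-u) * (-u) := by
    rw [h1, setIntegral_indicator measurableSet_Iic, Set.Ioi_inter_Iic]
  have h3 : ∫ u in Ioc (0:ℝ) 4, Real.exp (-u) * (-u)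
      = ∫ u in (0:ℝ)..4, Real.exp (-u) * (-u) := by
    rw [intervalIntegral.integral_of_le (by norm_num)]
  have h4 : ∫ u in (0:ℝ)..4, Real.exp (-u) * (-u)
      = ((4+1) * Real.exp (-4)) - ((0+1) * Real.exp (-0)) := by
    apply intervalIntegral.integral_eq_sub_of_hasDerivAt (f := fun x => (x+1) * Real.exp (-x))
    · intro x _
      have hd : HasDerivAt (fun x : ℝ => (x+1) * Real.exp (-x))
          (1 * Real.exp (-x) + (x+1) * (Real.exp (-x) * (-1))) x :=
        ((hasDerivAt_id x).add_const 1).mul ((hasDerivAt_neg x).exp)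
      exact hd.congr_deriv (by ring)
    · exact ((continuous_exp.comp continuous_neg).mul continuous_neg).intervalIntegrable _ _
  rw [h0, h2, h3, h4]; simp; ring

lemma tendsto_L : Tendsto (fun u : ℝ => 4 * (u - 1)) atTop atTop := by
  apply Tendsto.const_mul_atTop (by norm_num : (0:ℝ) < 4)
  exact tendsto_atTop_add_const_right _ (-1) tendsto_id

lemma tendsto_exp_L : Tendsto (fun u : ℝ => Real.exp (-(4 * (u - 1)))) atTop (𝓝 0) :=
  Real.tendsto_exp_atBot.comp (tendsto_neg_atTop_atBot.comp tendsto_L)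

lemma hasDerivAt_expL (x : ℝ) :
    HasDerivAt (fun u : ℝ => Real.exp (-(4 * (u - 1)))) (Real.exp (-(4 * (x - 1))) * (-4)) x := by
  have h : HasDerivAt (fun u : ℝ => -(4 * (u - 1))) (-4) x := by
    simpa using (((hasDerivAt_id x).sub_const 1).const_mul 4).fun_neg
  simpa using h.exp

lemma int_exp_Ioi : ∫ u in Ioi (1:ℝ), Real.exp (-(4 * (u - 1))) = 1/4 := by
  have ht : Tendsto (fun u : ℝ => -(1/4) * Real.exp (-(4 * (u - 1)))) atTop (𝓝 0) := by
    have := tendsto_exp_L.const_mul (-(1/4)); simpa using this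
  have h := integral_Ioi_of_hasDerivAt_of_nonneg' (a := 1)
    (g := fun u => -(1/4) * Real.exp (-(4 * (u - 1))))
    (g' := fun u => Real.exp (-(4 * (u - 1))))
    (fun x _ => by
      have := (hasDerivAt_expL x).const_mul (-(1/4))
      exact this.congr_deriv (by ring))
    (fun x _ => (exp_pos _).le)
    ht
  rw [h]; norm_num

lemma intOn_exp_Ioi : IntegrableOn (fun u => Real.exp (-(4 * (u - 1)))) (Ioi (1:ℝ)) := by
  apply integrableOn_Ioi_deriv_of_nonneg' (g := fun u => -(1/4) * Real.exp (-(4 * (u - 1))))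
  · intro x _
    have := (hasDerivAt_expL x).const_mul (-(1/4))
    exact this.congr_deriv (by ring)
  · exact fun x _ => (exp_pos _).le
  · show Tendsto (fun u : ℝ => -(1/4) * Real.exp (-(4 * (u - 1)))) atTop (𝓝 0)
    have := tendsto_exp_L.const_mul (-(1/4)); simpa using this

lemma hasDerivAt_G (x : ℝ) :
    HasDerivAt (fun u : ℝ => ((u - 1) + 1/4) * Real.exp (-(4 * (u - 1))))
      (Real.exp (-(4 * (x - 1))) * (-(4 * (x - 1)))) x := by
  have hd : HasDerivAt (fun u : ℝ => ((u - 1) + 1/4) * Real.exp (-(4 * (u - 1))))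
      (1 * Real.exp (-(4 * (x - 1))) + ((x - 1) + 1/4) * (Real.exp (-(4 * (x - 1))) * (-4))) x :=
    (((hasDerivAt_id x).sub_const 1).add_const (1/4)).mul (hasDerivAt_expL x)
  convert hd using 1; ring

lemma tendsto_G : Tendsto (fun u : ℝ => ((u - 1) + 1/4) * Real.exp (-(4 * (u - 1))))
    atTop (𝓝 0) := by
  have h1 : Tendsto (fun v : ℝ => v * Real.exp (-v)) atTop (𝓝 0) := by
    simpa using Real.tendsto_pow_mul_exp_neg_atTop_nhds_zero 1
  have h2 : Tendsto (fun u : ℝ => (4 * (u - 1)) * Real.exp (-(4 * (u - 1)))) atTop (𝓝 0) :=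
    h1.comp tendsto_L
  have h3 := (h2.const_mul (1/4)).add (tendsto_exp_L.const_mul (1/4))
  simp only [mul_zero, add_zero] at h3
  refine Tendsto.congr (fun u => by ring) h3

lemma int_glog_Ioi : ∫ u in Ioi (1:ℝ),
    Real.exp (-(4 * (u - 1))) * (-(4 * (u - 1))) = -(1/4) := by
  have h := integral_Ioi_of_hasDerivAt_of_nonpos' (a := 1)
    (g := fun u => ((u - 1) + 1/4) * Real.exp (-(4 * (u - 1))))
    (g' := fun u => Real.exp (-(4 * (u - 1))) * (-(4 * (u - 1))))
    (fun x _ => hasDerivAt_G x)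
    (fun x hx => by
      apply mul_nonpos_of_nonneg_of_nonpos (exp_pos _).le
      have : (1:ℝ) < x := hx
      nlinarith)
    tendsto_G
  rw [h]; norm_num

lemma intOn_glog_Ioi : IntegrableOn (fun u => Real.exp (-(4 * (u - 1))) * (-(4 * (u - 1))))
    (Ioi (1:ℝ)) := by
  apply integrableOn_Ioi_deriv_of_nonpos'
    (g := fun u => ((u - 1) + 1/4) * Real.exp (-(4 * (u - 1))))
  · exact fun x _ => hasDerivAt_G x
  · intro x hx
    apply mul_nonpos_of_nonneg_of_nonpos (exp_pos _).le
    have : (1:ℝ) < x := hx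
    nlinarith
  · exact tendsto_G

lemma int_myg : ∫ y, myg y = 5/2 := by
  have h0 : ∫ y, myg y = 2 * ∫ u in Ioi (0:ℝ), G0 u := integral_comp_abs (f := G0)
  have hsplit : Ioi (0:ℝ) = Ioc 0 1 ∪ Ioi 1 := (Ioc_union_Ioi_eq_Ioi zero_le_one).symm
  have hdisj : Disjoint (Ioc (0:ℝ) 1) (Ioi 1) := by
    apply Set.disjoint_left.2
    rintro x ⟨_, h1⟩ h2
    exact absurd h1 (not_le.2 h2)
  have hint1 : IntegrableOn G0 (Ioc (0:ℝ) 1) := by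
    apply (integrableOn_const ?_).congr_fun (fun u hu => (G0_eq_one hu.2).symm)
      measurableSet_Ioc
    simp [Real.volume_Ioc]
  have hint2 : IntegrableOn G0 (Ioi (1:ℝ)) := by
    apply intOn_exp_Ioi.congr_fun (fun u hu => (G0_eq_of_ge (le_of_lt hu)).symm) measurableSet_Ioi
  have h1 : ∫ u in Ioc (0:ℝ) 1, G0 u = 1 := by
    rw [setIntegral_congr_fun measurableSet_Ioc (fun u hu => G0_eq_one hu.2)]
    simp [Real.volume_Ioc]
  have h2 : ∫ u in Ioi (1:ℝ), G0 u = 1/4 := by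
    rw [setIntegral_congr_fun measurableSet_Ioi (fun u hu => G0_eq_of_ge (le_of_lt hu))]
    exact int_exp_Ioi
  rw [h0, hsplit, setIntegral_union hdisj measurableSet_Ioi hint1 hint2, h1, h2]
  norm_num

lemma int_myg_log : ∫ y, myg y * Real.log (myg y) = -(1/2) := by
  have h0 : ∫ y, myg y * Real.log (myg y) = 2 * ∫ u in Ioi (0:ℝ), G0 u * Real.log (G0 u) :=
    integral_comp_abs (f := fun u => G0 u * Real.log (G0 u))
  have hsplit : Ioi (0:ℝ) = Ioc 0 1 ∪ Ioi 1 := (Ioc_union_Ioi_eq_Ioi zero_le_one).symm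
  have hdisj : Disjoint (Ioc (0:ℝ) 1) (Ioi 1) := by
    apply Set.disjoint_left.2
    rintro x ⟨_, h1⟩ h2
    exact absurd h1 (not_le.2 h2)
  have e1 : ∀ u ∈ Ioc (0:ℝ) 1, G0 u * Real.log (G0 u) = 0 := by
    intro u hu; rw [G0_eq_one hu.2]; simp
  have e2 : ∀ u ∈ Ioi (1:ℝ), G0 u * Real.log (G0 u)
      = Real.exp (-(4 * (u - 1))) * (-(4 * (u - 1))) := by
    intro u hu; rw [G0_eq_of_ge (le_of_lt hu), Real.log_exp]
  have hint1 : IntegrableOn (fun u => G0 u * Real.log (G0 u)) (Ioc (0:ℝ) 1) := by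
    apply (integrableOn_zero).congr_fun (fun u hu => (e1 u hu).symm) measurableSet_Ioc
  have hint2 : IntegrableOn (fun u => G0 u * Real.log (G0 u)) (Ioi (1:ℝ)) := by
    apply intOn_glog_Ioi.congr_fun (fun u hu => (e2 u hu).symm) measurableSet_Ioi
  have h1 : ∫ u in Ioc (0:ℝ) 1, G0 u * Real.log (G0 u) = 0 := by
    rw [setIntegral_congr_fun measurableSet_Ioc e1]; simp
  have h2 : ∫ u in Ioi (1:ℝ), G0 u * Real.log (G0 u) = -(1/4) := by
    rw [setIntegral_congr_fun measurableSet_Ioi e2]; exact int_glog_Ioi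
  rw [h0, hsplit, setIntegral_union hdisj measurableSet_Ioi hint1 hint2, h1, h2]
  norm_num

lemma exp_neg_four_lt : Real.exp (-4) < 1/21 := by
  have h21 : (21:ℝ) < Real.exp 4 := by
    have h1 : (2.7:ℝ) < Real.exp 1 := by
      have := Real.exp_one_gt_d9
      linarith
    have h2 : (2.7:ℝ)^(4:ℕ) ≤ (Real.exp 1)^(4:ℕ) := by
      apply pow_le_pow_left₀ (by norm_num) h1.le
    have h3 : Real.exp 1 ^ (4:ℕ) = Real.exp (4:ℕ) := Real.exp_one_pow 4
    have : (21:ℝ) < (2.7:ℝ)^(4:ℕ) := by norm_num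
    push_cast at h3
    linarith
  rw [Real.exp_neg]
  rw [inv_lt_iff_one_lt_mul₀ (by positivity)]
  nlinarith [Real.exp_pos 4]

end Aux

/-- There is an integrable log-concave function `f : ℝ → [0,∞)` with
`h(f) + h(f°) > 1`. -/
theorem exists_entropy_sum_gt_one :
    ∃ f : ℝ → ℝ, (∀ x, 0 ≤ f x) ∧ LogConcave f ∧ Integrable f ∧
      1 < entropy f + entropy (polar1 f) := by
  refine ⟨myf, myf_nonneg, myf_logconcave, myf_integrable, ?_⟩
  rw [polar_myf]
  unfold entropy
  rw [int_myf, int_myf_log, int_myg, int_myg_log]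
  set E := Real.exp (-4) with hE
  have hE0 : 0 < E := Real.exp_pos _
  have hE1 : E < 1/21 := exp_neg_four_lt
  have h2 : (0:ℝ) < 2 - 2 * E := by nlinarith
  have key : (4:ℝ)/5 < -(10 * E - 2) / (2 - 2 * E) := by
    rw [div_lt_div_iff₀ (by norm_num) h2]
    nlinarith
  have h5 : -(-(1/2) : ℝ) / (5/2) = 1/5 := by norm_num
  rw [h5]
  linarith
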